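/- arXiv:2009.13880 — 4 statements merged into one kernel-verified Lean document; each statement's English description precedes it below -/
import Mathlib

section
/- The number of colored triangle-free triangulations of a convex n-gon equals n·2^(n-4), for n ≥ 5. -/
section

variable {n : ℕ} [NeZero n]

/-- An (external) edge of the convex polygon with vertices `ZMod n`. -/
def IsPolyEdge (s : Finset (ZMod n)) : Prop := ∃ a : ZMod n, s = {a, a + 1}

/-- A chord (internal edge, diagonal) of the polygon: a pair of distinct,
non-adjacent vertices. -/
def IsChord (s : Finset (ZMod n)) : Prop :=
  ∃ a b : ZMod n, s = {a, b} ∧ a ≠ b ∧ b ≠ a + 1 ∧ a ≠ b + 1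

/-- A short chord connects `i-1` and `i+1` for some vertex `i`. -/
def IsShortChord (s : Finset (ZMod n)) : Prop :=
  ∃ a : ZMod n, s = {a - 1, a + 1}

/-- `x` lies strictly between `a` and `b` in the clockwise cyclic order. -/
def StrictBtw (a b x : ZMod n) : Prop :=
  0 < (x - a).val ∧ (x - a).val < (b - a).val

/-- Two chords of the polygon cross (in the interior). -/
def ChordsCross (s t : Finset (ZMod n)) : Prop :=
  ∃ a b c d : ZMod n, s = {a, b} ∧ t = {c, d} ∧ StrictBtw a b c ∧ StrictBtw b a d

end

/-- A properly labelled (colored) triangle-free triangulation of a convex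
`(n+5)`-gon: `n+2` pairwise distinct pairwise non-crossing chords
`d 0, ..., d (n+1)` (hence a triangulation), with no internal triangle,
such that the chord labelled `0` is short, and in any triangle with exactly two
internal edges the labels of these are consecutive. -/
def IsCTFT {n : ℕ} (d : Fin (n + 2) → Finset (ZMod (n + 5))) : Prop :=
  (∀ i, IsChord (d i)) ∧
  Function.Injective d ∧
  (∀ i j, i ≠ j → ¬ ChordsCross (d i) (d j)) ∧
  (¬ ∃ a b c : ZMod (n + 5),
      (∃ i, d i = {a, b}) ∧ (∃ i, d i = {b, c}) ∧ (∃ i, d i = {a, c})) ∧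
  IsShortChord (d 0) ∧
  (∀ (a b c : ZMod (n + 5)) (i j : Fin (n + 2)), d i = {a, b} → d j = {b, c} →
    IsPolyEdge ({a, c} : Finset (ZMod (n + 5))) → ((i : ℕ) + 1 = j ∨ (j : ℕ) + 1 = i))

/-!
Every properly labelled triangle-free triangulation is a *snake*: its chord `0` is the short
chord `{a - 1, a + 1}`, and chord `k + 1` arises from chord `k` by moving either its left end one
step back or its right end one step forward. Conversely every snake is one, and the snake is
determined by `a` and its `n + 1` binary choices, whence `(n + 5) · 2 ^ (n + 1)`.

That snakes qualify is arithmetic in coordinates relative to `a + 1`. For the converse, suppose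
chords `0, …, k` follow a snake. Chord `k` cuts off a `(k + 3)`-gon already filled by chords
`0, …, k - 1`, so the `n + 1 - k` later chords lie in the other part, an `(n + 4 - k)`-gon, and
triangulate it. The triangle of that triangulation on chord `k` has exactly one more internal side
(by triangle-freeness, and since `k ≤ n`), and the labelling forces it to be chord `k + 1`. Both
counting steps use that an `m`-gon has at most `m - 3` pairwise non-crossing diagonals.
-/

open Finset

theorem Finset.pair_eq_pair_iff {α : Type*} [DecidableEq α] {a b c d : α} :
    ({a, b} : Finset α) = {c, d} ↔ (a = c ∧ b = d) ∨ (a = d ∧ b = c) := by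
  simp only [← Finset.coe_inj, Finset.coe_insert, Finset.coe_singleton, Set.pair_eq_pair_iff]

namespace CTFT

/-- Arcs `(p, q)` with `i ≤ p`, `q ≤ j` model the diagonals of the polygon with vertices
`i, …, j` together with its side `(i, j)`; `p + 2 ≤ q` excludes the other sides. -/
def ArcIn (i j : ℕ) (x : ℕ × ℕ) : Prop := i ≤ x.1 ∧ x.1 + 2 ≤ x.2 ∧ x.2 ≤ j

def Crosses (x y : ℕ × ℕ) : Prop := x.1 < y.1 ∧ y.1 < x.2 ∧ x.2 < y.2

def NonCrossing (T : Finset (ℕ × ℕ)) : Prop := ∀ x ∈ T, ∀ y ∈ T, ¬ Crosses x y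

section Arcs

variable {i j w : ℕ} {T : Finset (ℕ × ℕ)}

lemma NonCrossing.mono {T' : Finset (ℕ × ℕ)} (h : NonCrossing T) (hsub : T' ⊆ T) :
    NonCrossing T' :=
  fun x hx y hy => h x (hsub hx) y (hsub hy)

lemma arcIn_of_mem_filter_snd_le (hT : ∀ x ∈ T, ArcIn i j x) :
    ∀ x ∈ T.filter (·.2 ≤ w), ArcIn i w x := by
  intro x hx
  rw [mem_filter] at hx
  have := hT x hx.1
  unfold ArcIn at *
  omega

lemma arcIn_of_mem_filter_le_fst (hT : ∀ x ∈ T, ArcIn i j x) :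
    ∀ x ∈ T.filter (w ≤ ·.1), ArcIn w j x := by
  intro x hx
  rw [mem_filter] at hx
  have := hT x hx.1
  unfold ArcIn at *
  omega

lemma card_le_card_filter_add_card_filter (h : ∀ x ∈ T, x.2 ≤ w ∨ w ≤ x.1) :
    #T ≤ #(T.filter (·.2 ≤ w)) + #(T.filter (w ≤ ·.1)) :=
  calc #T ≤ #(T.filter (·.2 ≤ w) ∪ T.filter (w ≤ ·.1)) :=
        card_le_card fun x hx => by rcases h x hx with h | h <;> simp [hx, h]
    _ ≤ _ := card_union_le _ _

/-- `w` is the far end of the longest arc from `i`, or `i + 1` if there is none. -/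
lemma NonCrossing.exists_split (hnc : NonCrossing T) (hT : ∀ x ∈ T, ArcIn i j x)
    (hij : (i, j) ∉ T) (h2 : i + 2 ≤ j) :
    ∃ w, i < w ∧ w < j ∧ ((i, w) ∈ T ∨ w = i + 1) ∧ ∀ x ∈ T, x.2 ≤ w ∨ w ≤ x.1 := by
  set w := max (i + 1) ((T.filter (·.1 = i)).sup Prod.snd) with hw
  have hsup : ∀ x ∈ T, x.1 = i → x.2 ≤ w := fun x hx hxi =>
    le_max_of_le_right (le_sup (f := Prod.snd) (mem_filter.2 ⟨hx, hxi⟩))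
  have hleft : (i, w) ∈ T ∨ w = i + 1 := by
    rcases (T.filter (·.1 = i)).eq_empty_or_nonempty with h | h
    · simp [hw, h]
    obtain ⟨x, hx, hxw⟩ := exists_mem_eq_sup _ h Prod.snd
    rw [mem_filter] at hx
    by_cases hle : x.2 ≤ i + 1
    · right
      rw [hw, hxw]
      omega
    · left
      have hwx : w = x.2 := by
        rw [hw, hxw]
        omega
      rw [hwx, ← hx.2]
      exact hx.1
  refine ⟨w, by omega, ?_, hleft, fun x hx => ?_⟩
  · rcases hleft with h | h
    · have hne : w ≠ j := by rintro rfl; exact hij h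
      have := hT _ h
      unfold ArcIn at this
      omega
    · omega
  · by_cases hxi : x.1 = i
    · exact Or.inl (hsup x hx hxi)
    have hx' := hT x hx
    unfold ArcIn at hx'
    rcases hleft with h | h
    · have := hnc _ h x hx
      unfold Crosses at this
      omega
    · omega

private lemma card_le_sub_one_of_forall_subset (hT : ∀ x ∈ T, ArcIn i j x)
    (h : ∀ T' ⊆ T, (i, j) ∉ T' → #T' ≤ j - i - 2) : #T ≤ j - i - 1 := by
  by_cases hij : (i, j) ∈ T
  · have h1 := card_erase_of_mem hij
    have h2 := h _ (erase_subset _ _) (notMem_erase _ _)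
    have h3 := hT _ hij
    unfold ArcIn at h3
    omega
  · have := h T subset_rfl hij
    omega

theorem NonCrossing.card_le_sub_two (hnc : NonCrossing T) (hT : ∀ x ∈ T, ArcIn i j x)
    (hij : (i, j) ∉ T) : #T ≤ j - i - 2 := by
  induction hm : j - i using Nat.strong_induction_on generalizing i j T with
  | _ m IH =>
  subst hm
  rcases lt_or_ge j (i + 2) with h | h
  · have : T = ∅ := eq_empty_of_forall_notMem fun x hx => by
      have := hT x hx
      unfold ArcIn at this
      omega
    simp [this]
  obtain ⟨w, hiw, hwj, -, hcover⟩ := hnc.exists_split hT hij h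
  have hA : #(T.filter (·.2 ≤ w)) ≤ w - i - 1 :=
    card_le_sub_one_of_forall_subset (arcIn_of_mem_filter_snd_le hT) fun T' hsub hT' =>
      IH (w - i) (by omega) ((hnc.mono (filter_subset _ _)).mono hsub)
        (fun x hx => arcIn_of_mem_filter_snd_le hT x (hsub hx)) hT' rfl
  have hB : #(T.filter (w ≤ ·.1)) ≤ j - w - 1 :=
    card_le_sub_one_of_forall_subset (arcIn_of_mem_filter_le_fst hT) fun T' hsub hT' =>
      IH (j - w) (by omega) ((hnc.mono (filter_subset _ _)).mono hsub)
        (fun x hx => arcIn_of_mem_filter_le_fst hT x (hsub hx)) hT' rfl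
  have := card_le_card_filter_add_card_filter hcover
  omega

theorem NonCrossing.card_le_sub_one (hnc : NonCrossing T) (hT : ∀ x ∈ T, ArcIn i j x) :
    #T ≤ j - i - 1 :=
  card_le_sub_one_of_forall_subset hT fun _ hsub hij =>
    (hnc.mono hsub).card_le_sub_two (fun x hx => hT x (hsub hx)) hij

theorem NonCrossing.exists_apex (hnc : NonCrossing T) (hT : ∀ x ∈ T, ArcIn i j x)
    (hij : (i, j) ∉ T) (hcard : #T = j - i - 2) (h2 : i + 2 ≤ j) :
    ∃ w, i < w ∧ w < j ∧ ((i, w) ∈ T ∨ w = i + 1) ∧ ((w, j) ∈ T ∨ w + 1 = j) := by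
  obtain ⟨w, hiw, hwj, hleft, hcover⟩ := hnc.exists_split hT hij h2
  refine ⟨w, hiw, hwj, hleft, or_iff_not_imp_right.2 fun hw => by_contra fun hwT => ?_⟩
  have hA := (hnc.mono (filter_subset _ _)).card_le_sub_one
    (arcIn_of_mem_filter_snd_le (w := w) hT)
  have hB := (hnc.mono (filter_subset _ _)).card_le_sub_two
    (arcIn_of_mem_filter_le_fst (w := w) hT)
    (fun h => hwT (mem_filter.1 h).1)
  have := card_le_card_filter_add_card_filter hcover
  omega

end Arcs

section Polygon

variable {N : ℕ} {p q r s : ℕ}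

lemma add_natCast_inj (u : ZMod N) (hp : p < N) (hq : q < N) :
    u + (p : ZMod N) = u + q ↔ p = q := by
  rw [add_right_inj, ZMod.natCast_eq_natCast_iff', Nat.mod_eq_of_lt hp, Nat.mod_eq_of_lt hq]

lemma add_natCast_eq_add_natCast_iff [NeZero N] (u : ZMod N) (hp : p ≤ N) (hq : q < N) :
    u + (p : ZMod N) = u + q ↔ p = q ∨ (p = N ∧ q = 0) := by
  rcases hp.lt_or_eq with hp | rfl
  · rw [add_natCast_inj u hp hq]
    omega
  · rw [ZMod.natCast_self, ← Nat.cast_zero, add_natCast_inj u (NeZero.pos _) hq]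
    omega

lemma exists_eq_add_natCast [NeZero N] (u v : ZMod N) : ∃ p < N, v = u + p :=
  ⟨(v - u).val, ZMod.val_lt _, by rw [ZMod.natCast_zmod_val]; ring⟩

lemma pair_add_natCast_eq_iff (u : ZMod N) (hp : p < N) (hq : q < N) (hr : r < N)
    (hs : s < N) :
    ({u + (p : ZMod N), u + q} : Finset (ZMod N)) = {u + r, u + s} ↔
      (p = r ∧ q = s) ∨ (p = s ∧ q = r) := by
  rw [Finset.pair_eq_pair_iff, add_natCast_inj u hp hr, add_natCast_inj u hq hs,
    add_natCast_inj u hp hs, add_natCast_inj u hq hr]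

lemma isPolyEdge_pair_iff {a b : ZMod N} : IsPolyEdge {a, b} ↔ b = a + 1 ∨ a = b + 1 := by
  constructor
  · rintro ⟨c, h⟩
    rcases Finset.pair_eq_pair_iff.1 h with ⟨rfl, rfl⟩ | ⟨rfl, rfl⟩ <;> simp
  · rintro (h | h)
    · exact ⟨a, by rw [h]⟩
    · exact ⟨b, by rw [h, Finset.pair_comm]⟩

lemma isChord_pair_iff {a b : ZMod N} : IsChord {a, b} ↔ a ≠ b ∧ ¬ IsPolyEdge {a, b} := by
  rw [isPolyEdge_pair_iff]
  constructor
  · rintro ⟨c, e, h, hce, h1, h2⟩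
    rcases Finset.pair_eq_pair_iff.1 h with ⟨rfl, rfl⟩ | ⟨rfl, rfl⟩
    · exact ⟨hce, by tauto⟩
    · exact ⟨hce.symm, by tauto⟩
  · rintro ⟨hab, h⟩
    exact ⟨a, b, rfl, hab, by tauto⟩

lemma isPolyEdge_add_natCast_iff [NeZero N] (u : ZMod N) (hp : p < N) (hq : q < N) :
    IsPolyEdge ({u + (p : ZMod N), u + q} : Finset (ZMod N)) ↔
      q = p + 1 ∨ p = q + 1 ∨ (p = 0 ∧ q + 1 = N) ∨ (q = 0 ∧ p + 1 = N) := by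
  have succ_eq : ∀ x : ℕ, u + (x : ZMod N) + 1 = u + ((x + 1 : ℕ) : ZMod N) := fun x => by
    push_cast
    ring
  rw [isPolyEdge_pair_iff, succ_eq, succ_eq, eq_comm (a := u + (q : ZMod N)),
    add_natCast_eq_add_natCast_iff u hp hq, eq_comm (a := u + (p : ZMod N)),
    add_natCast_eq_add_natCast_iff u hq hp]
  omega

lemma isChord_add_natCast_iff [NeZero N] (u : ZMod N) (hpq : p < q) (hq : q < N) :
    IsChord ({u + (p : ZMod N), u + q} : Finset (ZMod N)) ↔ p + 2 ≤ q ∧ q + 2 ≤ N + p := by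
  rw [isChord_pair_iff, isPolyEdge_add_natCast_iff u (hpq.trans hq) hq, Ne,
    add_natCast_inj u (hpq.trans hq) hq]
  omega

lemma _root_.IsChord.exists_eq_pair [NeZero N] {c : Finset (ZMod N)} (hc : IsChord c)
    (u : ZMod N) :
    ∃ p q, p < q ∧ q < N ∧ c = {u + (p : ZMod N), u + q} := by
  obtain ⟨a, b, rfl, hab, -⟩ := hc
  obtain ⟨p, hp, rfl⟩ := exists_eq_add_natCast u a
  obtain ⟨q, hq, rfl⟩ := exists_eq_add_natCast u b
  rcases lt_trichotomy p q with h | rfl | h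
  · exact ⟨p, q, h, hq, rfl⟩
  · exact absurd rfl hab
  · exact ⟨q, p, h, hp, Finset.pair_comm _ _⟩

lemma strictBtw_add_natCast_iff (u : ZMod N) (hp : p < N) (hq : q < N) (hr : r < N) :
    StrictBtw (u + (p : ZMod N)) (u + q) (u + r) ↔
      0 < (if p ≤ r then r - p else N + r - p) ∧
        (if p ≤ r then r - p else N + r - p) < (if p ≤ q then q - p else N + q - p) := by
  have val_sub : ∀ x < N, ((x : ZMod N) - p).val = if p ≤ x then x - p else N + x - p := by
    intro x hx
    split_ifs with h
    · rw [← Nat.cast_sub h, ZMod.val_cast_of_lt (by omega)]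
    · rw [← ZMod.val_cast_of_lt (show N + x - p < N by omega), Nat.cast_sub (by omega),
        Nat.cast_add, ZMod.natCast_self, zero_add]
  rw [StrictBtw, add_sub_add_left_eq_sub, add_sub_add_left_eq_sub, val_sub r hr, val_sub q hq]

lemma chordsCross_add_natCast_iff (u : ZMod N) (hpq : p < q) (hq : q < N) (hrs : r < s)
    (hs : s < N) :
    ChordsCross ({u + (p : ZMod N), u + q} : Finset (ZMod N)) {u + (r : ZMod N), u + s} ↔
      Crosses (p, q) (r, s) ∨ Crosses (r, s) (p, q) := by
  unfold Crosses
  constructor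
  · rintro ⟨A, B, C, D, h1, h2, hb1, hb2⟩
    rcases Finset.pair_eq_pair_iff.1 h1 with ⟨rfl, rfl⟩ | ⟨rfl, rfl⟩ <;>
      rcases Finset.pair_eq_pair_iff.1 h2 with ⟨rfl, rfl⟩ | ⟨rfl, rfl⟩ <;>
      simp (disch := omega) only [strictBtw_add_natCast_iff] at hb1 hb2 <;>
      split_ifs at hb1 hb2 <;> omega
  · rintro (h | h)
    · refine ⟨_, _, _, _, rfl, rfl, ?_, ?_⟩ <;>
        simp (disch := omega) only [strictBtw_add_natCast_iff] <;> split_ifs <;> omega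
    · refine ⟨_, _, _, _, rfl, Finset.pair_comm _ _, ?_, ?_⟩ <;>
        simp (disch := omega) only [strictBtw_add_natCast_iff] <;> split_ifs <;> omega

end Polygon

section Regions

variable {N : ℕ} {m : ℕ}

def InArc (u : ZMod N) (m : ℕ) (c : Finset (ZMod N)) : Prop :=
  ∃ x : ℕ × ℕ, ArcIn 0 m x ∧ c = {u + (x.1 : ZMod N), u + x.2}

lemma _root_.IsChord.inArc_or_inArc [NeZero N] {c : Finset (ZMod N)} (hc : IsChord c)
    (u : ZMod N) (hm : m < N) (hnc : ¬ ChordsCross c {u, u + (m : ZMod N)}) :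
    InArc u m c ∨ InArc (u + (m : ZMod N)) (N - m) c := by
  obtain ⟨p, q, hpq, hq, rfl⟩ := hc.exists_eq_pair u
  have hch := (isChord_add_natCast_iff u hpq hq).1 hc
  by_cases hqm : q ≤ m
  · exact Or.inl ⟨(p, q), ⟨Nat.zero_le _, hch.1, hqm⟩, rfl⟩
  right
  by_cases hpm : m ≤ p
  · refine ⟨(p - m, q - m), ⟨Nat.zero_le _, by omega, by omega⟩, ?_⟩
    simp only [add_assoc, ← Nat.cast_add, Nat.add_sub_cancel' hpm,
      Nat.add_sub_cancel' (hpm.trans hpq.le)]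
  have hp : p = 0 := by
    by_contra hp
    apply hnc
    have := (chordsCross_add_natCast_iff u hpq hq (show 0 < m by omega) hm).2
      (Or.inr ⟨by omega, by omega, by omega⟩)
    simpa using this
  subst hp
  refine ⟨(q - m, N - m), ⟨Nat.zero_le _, by omega, le_rfl⟩, ?_⟩
  rw [Finset.pair_comm]
  simp only [add_assoc, ← Nat.cast_add, Nat.add_sub_cancel' (by omega : m ≤ q),
    Nat.add_sub_cancel' hm.le, ZMod.natCast_self, Nat.cast_zero]

variable {ι : Type*} {S : Finset ι} {d : ι → Finset (ZMod N)} {u : ZMod N}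

lemma exists_arcs_of_forall_inArc (hm : m < N) (hinj : Set.InjOn d S)
    (hnc : ∀ l ∈ S, ∀ l' ∈ S, l ≠ l' → ¬ ChordsCross (d l) (d l'))
    (hS : ∀ l ∈ S, InArc u m (d l)) :
    ∃ T : Finset (ℕ × ℕ), #T = #S ∧ (∀ x ∈ T, ArcIn 0 m x) ∧ NonCrossing T ∧
      ∀ x ∈ T, ∃ l ∈ S, d l = {u + (x.1 : ZMod N), u + x.2} := by
  choose! f hf using hS
  refine ⟨S.image f, card_image_of_injOn fun l hl l' hl' h => hinj hl hl' ?_, ?_, ?_, ?_⟩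
  · rw [(hf l hl).2, (hf l' hl').2, h]
  · simp only [mem_image, forall_exists_index, and_imp]
    rintro _ l hl rfl
    exact (hf l hl).1
  · simp only [NonCrossing, mem_image, forall_exists_index, and_imp]
    rintro _ l hl rfl _ l' hl' rfl hcr
    obtain ⟨⟨-, h1, h2⟩, e⟩ := hf l hl
    obtain ⟨⟨-, h1', h2'⟩, e'⟩ := hf l' hl'
    by_cases hll : l = l'
    · subst hll
      exact lt_irrefl _ hcr.1
    · apply hnc l hl l' hl' hll
      rw [e, e', chordsCross_add_natCast_iff u (by omega) (by omega) (by omega) (by omega)]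
      exact Or.inl hcr
  · simp only [mem_image, forall_exists_index, and_imp]
    rintro _ l hl rfl
    exact ⟨l, hl, (hf l hl).2⟩

theorem card_le_of_forall_inArc (hm : m < N) (hinj : Set.InjOn d S)
    (hnc : ∀ l ∈ S, ∀ l' ∈ S, l ≠ l' → ¬ ChordsCross (d l) (d l'))
    (hS : ∀ l ∈ S, InArc u m (d l)) (hside : ∀ l ∈ S, d l ≠ {u, u + (m : ZMod N)}) :
    #S ≤ m - 2 := by
  obtain ⟨T, hcard, hT, hncT, hmem⟩ := exists_arcs_of_forall_inArc hm hinj hnc hS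
  rw [← hcard]
  refine hncT.card_le_sub_two hT fun h => ?_
  obtain ⟨l, hl, e⟩ := hmem _ h
  exact hside l hl (by simpa using e)

theorem exists_apex_of_forall_inArc (hm : m < N) (hinj : Set.InjOn d S)
    (hnc : ∀ l ∈ S, ∀ l' ∈ S, l ≠ l' → ¬ ChordsCross (d l) (d l'))
    (hS : ∀ l ∈ S, InArc u m (d l)) (hside : ∀ l ∈ S, d l ≠ {u, u + (m : ZMod N)})
    (hcard : #S = m - 2) (h2 : 2 ≤ m) :
    ∃ w, 0 < w ∧ w < m ∧ ((∃ l ∈ S, d l = {u, u + (w : ZMod N)}) ∨ w = 1) ∧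
      ((∃ l ∈ S, d l = {u + (w : ZMod N), u + m}) ∨ w + 1 = m) := by
  obtain ⟨T, hcardT, hT, hncT, hmem⟩ := exists_arcs_of_forall_inArc hm hinj hnc hS
  have hside' : ((0 : ℕ), m) ∉ T := fun h => by
    obtain ⟨l, hl, e⟩ := hmem _ h
    exact hside l hl (by simpa using e)
  obtain ⟨w, hw0, hwm, hleft, hright⟩ := hncT.exists_apex hT hside' (by omega) (by omega)
  refine ⟨w, hw0, hwm, hleft.imp (fun h => ?_) id, hright.imp (hmem _) id⟩
  obtain ⟨l, hl, e⟩ := hmem _ h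
  exact ⟨l, hl, by simpa using e⟩

end Regions

section Snake

variable {n : ℕ} (a : ZMod (n + 5)) (b : ℕ → Bool) {i j k : ℕ}

def numTrue (b : ℕ → Bool) (k : ℕ) : ℕ := ∑ j ∈ range k, (b j).toNat

lemma numTrue_zero : numTrue b 0 = 0 := rfl

lemma numTrue_succ (k : ℕ) : numTrue b (k + 1) = numTrue b k + (b k).toNat :=
  sum_range_succ _ _

lemma numTrue_le (k : ℕ) : numTrue b k ≤ k := by
  induction k with
  | zero => rfl
  | succ k ih =>
    have := Bool.toNat_le (b k)
    rw [numTrue_succ]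
    omega

lemma numTrue_mono (h : i ≤ j) :
    numTrue b i ≤ numTrue b j ∧ i - numTrue b i ≤ j - numTrue b j := by
  induction j, h using Nat.le_induction with
  | base => omega
  | succ j _ ih =>
    have := numTrue_le b j
    have := Bool.toNat_le (b j)
    rw [numTrue_succ]
    omega

/-- Monotonicity and `1`-Lipschitz continuity of the numbers of `true`s and `false`s, in a form
`omega` can use without case splits. -/
lemma numTrue_le_add_sub (i j : ℕ) :
    numTrue b i ≤ numTrue b j + (i - j) ∧ i - numTrue b i ≤ j - numTrue b j + (i - j) := by
  have := numTrue_le b i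
  have := numTrue_le b j
  rcases le_total i j with h | h
  · have := numTrue_mono b h
    omega
  · have := numTrue_mono b h
    omega

lemma numTrue_congr {b' : ℕ → Bool} (h : ∀ j < k, b j = b' j) : numTrue b k = numTrue b' k :=
  sum_congr rfl fun j hj => by rw [h j (mem_range.1 hj)]

def snakeL (k : ℕ) : ZMod (n + 5) := a - 1 - numTrue b k

def snakeR (k : ℕ) : ZMod (n + 5) := a + 1 + (k - numTrue b k : ℕ)

/-- The `k`-th chord of the snake starting at the short chord `{a - 1, a + 1}`: at step `j` its
left end moves back if `b j`, and its right end moves forward otherwise. -/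
def snake (k : ℕ) : Finset (ZMod (n + 5)) := {snakeL a b k, snakeR a b k}

lemma snake_zero : snake a b 0 = {a - 1, a + 1} := by
  simp [snake, snakeL, snakeR, numTrue_zero]

lemma snakeR_eq_snakeL_add (k : ℕ) : snakeR a b k = snakeL a b k + (k + 2 : ℕ) := by
  rw [snakeR, snakeL, Nat.cast_sub (numTrue_le b k)]
  push_cast
  ring

lemma snakeR_add_eq_snakeL (hk : k ≤ n + 3) :
    snakeR a b k + (n + 3 - k : ℕ) = snakeL a b k := by
  rw [snakeR_eq_snakeL_add, add_assoc, ← Nat.cast_add, show k + 2 + (n + 3 - k) = n + 5 by omega,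
    ZMod.natCast_self, add_zero]

lemma snake_eq_pair_snakeL (hjk : j ≤ k) :
    snake a b j = {snakeL a b k + (numTrue b k - numTrue b j : ℕ),
      snakeL a b k + (numTrue b k - numTrue b j + (j + 2) : ℕ)} := by
  have hL : snakeL a b j = snakeL a b k + (numTrue b k - numTrue b j : ℕ) := by
    rw [snakeL, snakeL, Nat.cast_sub (numTrue_mono b hjk).1]
    ring
  rw [snake, snakeR_eq_snakeL_add, hL, add_assoc, ← Nat.cast_add]

lemma snake_eq_pair_snakeL_self (k : ℕ) :
    snake a b k = {snakeL a b k, snakeL a b k + (k + 2 : ℕ)} := by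
  rw [snake, snakeR_eq_snakeL_add]

lemma snake_eq_pair (hk : k ≤ n + 1) :
    snake a b k = {a + 1 + (k - numTrue b k : ℕ), a + 1 + (n + 3 - numTrue b k : ℕ)} := by
  have hL : snakeL a b k = a + 1 + (n + 3 - numTrue b k : ℕ) := by
    have h := ZMod.natCast_self (n + 5)
    have := numTrue_le b k
    rw [snakeL, Nat.cast_sub (by omega)]
    push_cast at h ⊢
    linear_combination -h
  rw [snake, hL, Finset.pair_comm, snakeR]

lemma snake_congr {b' : ℕ → Bool} (h : ∀ j < k, b j = b' j) : snake a b k = snake a b' k := by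
  simp only [snake, snakeL, snakeR, numTrue_congr b h]

lemma snake_update_of_le (β : Bool) (hjk : j ≤ k) :
    snake a (Function.update b k β) j = snake a b j :=
  snake_congr a _ fun _ hi => Function.update_of_ne (by omega) _ _

lemma snake_update_succ (β : Bool) :
    snake a (Function.update b k β) (k + 1) =
      if β then {snakeL a b k - 1, snakeR a b k} else {snakeL a b k, snakeR a b k + 1} := by
  have ht : numTrue (Function.update b k β) (k + 1) = numTrue b k + β.toNat := by
    rw [numTrue_succ, Function.update_self,
      numTrue_congr _ fun _ hi => Function.update_of_ne (by omega) _ _]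
  have := numTrue_le b k
  cases β
  · have e : k + 1 - (numTrue b k + 0) = k - numTrue b k + 1 := by omega
    simp only [snake, snakeL, snakeR, ht, Bool.toNat_false, e, Bool.false_eq_true, if_false]
    push_cast
    ring_nf
  · have e : k + 1 - (numTrue b k + 1) = k - numTrue b k := by omega
    simp only [snake, snakeL, snakeR, ht, Bool.toNat_true, e, if_true]
    push_cast
    ring_nf

lemma snake_isChord (hk : k ≤ n + 1) : IsChord (snake a b k) := by
  have := numTrue_le b k
  rw [snake_eq_pair a b hk, isChord_add_natCast_iff _ (by omega) (by omega)]
  omega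

lemma eq_of_snake_eq (hi : i ≤ n + 1) (hj : j ≤ n + 1) (h : snake a b i = snake a b j) :
    i = j := by
  have := numTrue_le b i
  have := numTrue_le b j
  rw [snake_eq_pair a b hi, snake_eq_pair a b hj,
    pair_add_natCast_eq_iff _ (by omega) (by omega) (by omega) (by omega)] at h
  omega

lemma not_chordsCross_snake (hi : i ≤ n + 1) (hj : j ≤ n + 1) :
    ¬ ChordsCross (snake a b i) (snake a b j) := by
  have := numTrue_le_add_sub b i j
  have := numTrue_le_add_sub b j i
  have := numTrue_le b i
  have := numTrue_le b j
  rw [snake_eq_pair a b hi, snake_eq_pair a b hj,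
    chordsCross_add_natCast_iff _ (by omega) (by omega) (by omega) (by omega)]
  unfold Crosses
  omega

/-- A vertex shared by two chords of the snake is the left end of both or the right end of both,
so the three sides of a triangle cannot alternate between left and right ends. -/
lemma snake_no_triangle {i₁ i₂ i₃ : ℕ} (h₁ : i₁ ≤ n + 1) (h₂ : i₂ ≤ n + 1) (h₃ : i₃ ≤ n + 1)
    {A B C : ZMod (n + 5)} (e₁ : snake a b i₁ = {A, B}) (e₂ : snake a b i₂ = {B, C})
    (e₃ : snake a b i₃ = {A, C}) : False := by
  obtain ⟨α, hα, rfl⟩ := exists_eq_add_natCast (a + 1) A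
  obtain ⟨β, hβ, rfl⟩ := exists_eq_add_natCast (a + 1) B
  obtain ⟨γ, hγ, rfl⟩ := exists_eq_add_natCast (a + 1) C
  have := numTrue_le_add_sub b i₁ i₂
  have := numTrue_le_add_sub b i₂ i₁
  have := numTrue_le_add_sub b i₁ i₃
  have := numTrue_le_add_sub b i₃ i₁
  have := numTrue_le_add_sub b i₂ i₃
  have := numTrue_le_add_sub b i₃ i₂
  have := numTrue_le b i₁
  have := numTrue_le b i₂
  have := numTrue_le b i₃
  rw [snake_eq_pair a b h₁, pair_add_natCast_eq_iff _ (by omega) (by omega) hα hβ] at e₁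
  rw [snake_eq_pair a b h₂, pair_add_natCast_eq_iff _ (by omega) (by omega) hβ hγ] at e₂
  rw [snake_eq_pair a b h₃, pair_add_natCast_eq_iff _ (by omega) (by omega) hα hγ] at e₃
  omega

lemma snake_consecutive_of_isPolyEdge (hi : i ≤ n + 1) (hj : j ≤ n + 1) {A B C : ZMod (n + 5)}
    (e₁ : snake a b i = {A, B}) (e₂ : snake a b j = {B, C}) (hp : IsPolyEdge {A, C}) :
    i + 1 = j ∨ j + 1 = i := by
  obtain ⟨α, hα, rfl⟩ := exists_eq_add_natCast (a + 1) A
  obtain ⟨β, hβ, rfl⟩ := exists_eq_add_natCast (a + 1) B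
  obtain ⟨γ, hγ, rfl⟩ := exists_eq_add_natCast (a + 1) C
  have := numTrue_le_add_sub b i j
  have := numTrue_le_add_sub b j i
  have := numTrue_le b i
  have := numTrue_le b j
  rw [snake_eq_pair a b hi, pair_add_natCast_eq_iff _ (by omega) (by omega) hα hβ] at e₁
  rw [snake_eq_pair a b hj, pair_add_natCast_eq_iff _ (by omega) (by omega) hβ hγ] at e₂
  rw [isPolyEdge_add_natCast_iff _ hα hγ] at hp
  omega

theorem isCTFT_snake : IsCTFT fun i : Fin (n + 2) => snake a b i := by
  have hi : ∀ i : Fin (n + 2), (i : ℕ) ≤ n + 1 := fun i => Nat.le_of_lt_succ i.isLt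
  refine ⟨fun i => snake_isChord a b (hi i),
    fun i j h => Fin.ext (eq_of_snake_eq a b (hi i) (hi j) h),
    fun i j _ => not_chordsCross_snake a b (hi i) (hi j), ?_, ⟨a, snake_zero a b⟩,
    fun A B C i j e₁ e₂ hp => snake_consecutive_of_isPolyEdge a b (hi i) (hi j) e₁ e₂ hp⟩
  rintro ⟨A, B, C, ⟨i₁, e₁⟩, ⟨i₂, e₂⟩, ⟨i₃, e₃⟩⟩
  exact snake_no_triangle a b (hi i₁) (hi i₂) (hi i₃) e₁ e₂ e₃

theorem eq_of_forall_snake_eq {a' : ZMod (n + 5)} {b' : ℕ → Bool}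
    (h : ∀ i ≤ n + 1, snake a b i = snake a' b' i) : a = a' ∧ ∀ j ≤ n, b j = b' j := by
  have ha : a = a' := by
    have h0 := h 0 (Nat.zero_le _)
    rw [snake_zero, snake_zero, Finset.pair_eq_pair_iff] at h0
    rcases h0 with ⟨h0, -⟩ | ⟨h₁, h₂⟩
    · simpa using h0
    · have h4 : ((4 : ℕ) : ZMod (n + 5)) = 0 := by
        push_cast
        linear_combination h₂ - h₁
      have := Nat.le_of_dvd (by norm_num) ((ZMod.natCast_eq_zero_iff _ _).1 h4)
      omega
  subst ha
  have ht : ∀ i ≤ n + 1, numTrue b i = numTrue b' i := by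
    intro i hi
    have := numTrue_le b i
    have := numTrue_le b' i
    have hi' := h i hi
    rw [snake_eq_pair a b hi, snake_eq_pair a b' hi,
      pair_add_natCast_eq_iff _ (by omega) (by omega) (by omega) (by omega)] at hi'
    omega
  refine ⟨rfl, fun j hj => ?_⟩
  have hj' := ht (j + 1) (by omega)
  rw [numTrue_succ, numTrue_succ, ht j (by omega), Nat.add_left_cancel_iff] at hj'
  revert hj'
  cases b j <;> cases b' j <;> simp

end Snake

section Structure

variable {n : ℕ} {d : Fin (n + 2) → Finset (ZMod (n + 5))} {a : ZMod (n + 5)} {b : ℕ → Bool}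

lemma _root_.IsCTFT.not_inArc_snakeL (hd : IsCTFT d) (k : Fin (n + 1))
    (hsnake : ∀ j ≤ k.castSucc, d j = snake a b j) {l : Fin (n + 2)} (hl : k.castSucc < l) :
    ¬ InArc (snakeL a b k) (k + 2) (d l) := by
  intro hin
  obtain ⟨-, hinj, hnc, -⟩ := hd
  have hdk : d k.castSucc = {snakeL a b k, snakeL a b k + ((k + 2 : ℕ) : ZMod (n + 5))} := by
    rw [hsnake _ le_rfl, Fin.val_castSucc, snake_eq_pair_snakeL_self]
  have hcard := card_le_of_forall_inArc (S := insert l (Iio k.castSucc)) (d := d)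
    (u := snakeL a b k) (show (k : ℕ) + 2 < n + 5 by omega) hinj.injOn
    (fun l _ l' _ h => hnc l l' h) ?_ ?_
  · rw [card_insert_of_notMem (by simpa using hl.le), Fin.card_Iio, Fin.val_castSucc] at hcard
    omega
  · intro j hj
    rcases mem_insert.1 hj with rfl | hj
    · exact hin
    have hjk : (j : ℕ) ≤ k := (mem_Iio.1 hj).le
    have := numTrue_le_add_sub b j k
    have := numTrue_le b j
    have := numTrue_le b k
    rw [hsnake j (mem_Iio.1 hj).le, snake_eq_pair_snakeL a b hjk]
    exact ⟨(numTrue b k - numTrue b j, numTrue b k - numTrue b j + (j + 2)),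
      ⟨Nat.zero_le _, by omega, by omega⟩, rfl⟩
  · intro j hj he
    have hjk := hinj (he.trans hdk.symm)
    rcases mem_insert.1 hj with rfl | hj
    · exact hl.ne' hjk
    · exact (mem_Iio.1 hj).ne hjk

lemma _root_.IsCTFT.inArc_snakeR (hd : IsCTFT d) (k : Fin (n + 1))
    (hsnake : ∀ j ≤ k.castSucc, d j = snake a b j) {l : Fin (n + 2)} (hl : k.castSucc < l) :
    InArc (snakeR a b k) (n + 3 - k) (d l) := by
  have ⟨hch, _, hnc, _⟩ := hd
  have hdk : d k.castSucc = {snakeL a b k, snakeL a b k + ((k + 2 : ℕ) : ZMod (n + 5))} := by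
    rw [hsnake _ le_rfl, Fin.val_castSucc, snake_eq_pair_snakeL_self]
  rcases (hch l).inArc_or_inArc (snakeL a b k) (show (k : ℕ) + 2 < n + 5 by omega)
    (hdk ▸ hnc l _ hl.ne') with h | h
  · exact absurd h (hd.not_inArc_snakeL k hsnake hl)
  · rwa [← snakeR_eq_snakeL_add, show n + 5 - (k + 2) = n + 3 - k by omega] at h

theorem _root_.IsCTFT.snake_succ (hd : IsCTFT d) (k : Fin (n + 1))
    (hsnake : ∀ j ≤ k.castSucc, d j = snake a b j) :
    d k.succ = {snakeL a b k - 1, snakeR a b k} ∨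
      d k.succ = {snakeL a b k, snakeR a b k + 1} := by
  have ⟨_, hinj, hnc, hntri, _, hlab⟩ := hd
  set u := snakeR a b k
  have hx : u + ((n + 3 - k : ℕ) : ZMod (n + 5)) = snakeL a b k :=
    snakeR_add_eq_snakeL a b (by omega)
  have hdk : d k.castSucc = {u, u + ((n + 3 - k : ℕ) : ZMod (n + 5))} := by
    rw [hsnake _ le_rfl, hx, Fin.val_castSucc, snake, Finset.pair_comm]
  have hnext : ∀ l, k.castSucc < l → ∀ A B C, d k.castSucc = {A, B} → d l = {B, C} →
      IsPolyEdge {A, C} → l = k.succ := by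
    intro l hl A B C e₁ e₂ hp
    have := hlab A B C _ _ e₁ e₂ hp
    rw [Fin.lt_def, Fin.val_castSucc] at hl
    rw [Fin.val_castSucc] at this
    ext
    rw [Fin.val_succ]
    omega
  obtain ⟨w, hw0, hwm, hleft, hright⟩ := exists_apex_of_forall_inArc (S := Ioi k.castSucc)
    (show n + 3 - k < n + 5 by omega) hinj.injOn (fun l _ l' _ h => hnc l l' h)
    (fun l hl => hd.inArc_snakeR k hsnake (mem_Ioi.1 hl))
    (fun l hl h => (mem_Ioi.1 hl).ne' (hinj (h.trans hdk.symm)))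
    (by rw [Fin.card_Ioi, Fin.val_castSucc]; omega) (by omega)
  rcases hleft with ⟨l, hl, e⟩ | rfl <;> rcases hright with ⟨l', hl', e'⟩ | hw
  · exact absurd ⟨u, u + w, _, ⟨l, e⟩, ⟨l', e'⟩, ⟨_, hdk⟩⟩ hntri
  · left
    have hxw : snakeL a b k = u + w + 1 := by
      rw [← hx, ← hw]
      push_cast
      ring
    rw [← hnext l (mem_Ioi.1 hl) _ u _ (by rw [hdk, hx, Finset.pair_comm]) e
      (isPolyEdge_pair_iff.2 (Or.inr hxw)), e, hxw, add_sub_cancel_right, Finset.pair_comm]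
  · right
    have hl'' := hnext l' (mem_Ioi.1 hl') u _ (u + 1) (by rw [hdk, hx])
      (by rw [e', hx, Nat.cast_one, Finset.pair_comm]) (isPolyEdge_pair_iff.2 (Or.inl rfl))
    rw [← hl'', e', hx, Nat.cast_one, Finset.pair_comm]
  · omega

theorem _root_.IsCTFT.exists_eq_snake (hd : IsCTFT d) : ∃ a b, ∀ i, d i = snake a b i := by
  have ⟨_, _, _, _, ⟨a, ha⟩, _⟩ := hd
  suffices ∀ k : Fin (n + 2), ∃ b, ∀ j ≤ k, d j = snake a b j by
    obtain ⟨b, hb⟩ := this (Fin.last _)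
    exact ⟨a, b, fun i => hb i (Fin.le_last i)⟩
  intro k
  induction k using Fin.induction with
  | zero =>
    exact ⟨fun _ => false, fun j hj => by
      rw [Fin.le_zero_iff.1 hj, ha, Fin.val_zero, snake_zero]⟩
  | succ k ih =>
    obtain ⟨b, hb⟩ := ih
    obtain ⟨β, hβ⟩ : ∃ β, d k.succ = snake a (Function.update b k β) (k + 1) := by
      rcases hd.snake_succ k hb with h | h
      · exact ⟨true, by rw [h, snake_update_succ]; rfl⟩
      · exact ⟨false, by rw [h, snake_update_succ]; rfl⟩
    refine ⟨Function.update b k β, fun j hj => ?_⟩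
    rcases hj.lt_or_eq with hj | rfl
    · have hj' : j ≤ k.castSucc := Fin.le_castSucc_iff.2 hj
      rw [hb j hj', snake_update_of_le a b β (show (j : ℕ) ≤ k from hj')]
    · rw [hβ, Fin.val_succ]

end Structure

def snakeOfBits {n : ℕ} (a : ZMod (n + 5)) (b : Fin (n + 1) → Bool) :
    Fin (n + 2) → Finset (ZMod (n + 5)) :=
  fun i => snake a (fun j => if h : j < n + 1 then b ⟨j, h⟩ else false) i

theorem isCTFT_snakeOfBits {n : ℕ} (a : ZMod (n + 5)) (b : Fin (n + 1) → Bool) :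
    IsCTFT (snakeOfBits a b) :=
  isCTFT_snake _ _

theorem bijective_snakeOfBits {n : ℕ} :
    Function.Bijective fun ab : ZMod (n + 5) × (Fin (n + 1) → Bool) =>
      (⟨snakeOfBits ab.1 ab.2, isCTFT_snakeOfBits _ _⟩ : {d // IsCTFT d}) := by
  constructor
  · rintro ⟨a, b⟩ ⟨a', b'⟩ h
    obtain ⟨rfl, hb⟩ := eq_of_forall_snake_eq a _ fun i hi =>
      congrFun (Subtype.ext_iff.1 h) ⟨i, by omega⟩
    refine Prod.ext rfl (funext fun j => ?_)
    simpa [j.isLt] using hb j (by omega)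
  · rintro ⟨d, hd⟩
    obtain ⟨a, b, hb⟩ := hd.exists_eq_snake
    refine ⟨(a, fun j => b j), Subtype.ext (funext fun i => ?_)⟩
    show snakeOfBits a _ i = d i
    rw [hb, snakeOfBits]
    exact snake_congr a _ fun j hj => by simp [show j < n + 1 by omega]

end CTFT

/-- The number of colored triangle-free triangulations of a convex `n`-gon is
`n·2^(n-4)`, for `n ≥ 5` (here `n` is `n+5`). -/
theorem stmt0 (n : ℕ) :
    Nat.card {d : Fin (n + 2) → Finset (ZMod (n + 5)) // IsCTFT d} =
      (n + 5) * 2 ^ (n + 1) := by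
  rw [← Nat.card_eq_of_bijective _ CTFT.bijective_snakeOfBits, Nat.card_prod, Nat.card_zmod,
    Nat.card_fun]
  simp
end

section
/- The number of arc permutations in S_n equals n·2^(n-2), for n ≥ 2. -/
/-- A subset of the cyclic group `ZMod n` is a cyclic interval if it has the
form `{a, a+1, ..., a+k-1}`. -/
def IsCyclicInterval {n : ℕ} [NeZero n] (s : Finset (ZMod n)) : Prop :=
  ∃ a : ZMod n, s = (Finset.range s.card).image fun j : ℕ => a + (j : ZMod n)

/-- A permutation of `ZMod n` (positions ordered by their canonical
representatives, i.e. `[π(1),...,π(n)]` with `n` identified with `0`) is an arc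
permutation if every prefix of values forms an interval in the cyclic group
`ZMod n`. -/
def IsArcPerm {n : ℕ} [NeZero n] (π : Equiv.Perm (ZMod n)) : Prop :=
  ∀ k : ℕ,
    IsCyclicInterval ((Finset.univ.filter fun x : ZMod n => x.val < k).image π)

/-!
An arc permutation is an injective word in `ZMod m` all of whose prefixes are arcs. Such a word
is built letter by letter: the first letter is arbitrary (`m` choices), and an arc `{a, …, a+k-1}`
with `0 < k < m` can only be extended by one of its two neighbours `a - 1` and `a + k`. These are
distinct for `k ≤ m - 2` and coincide for `k = m - 1`, which gives `m · 2 ^ (m - 2) · 1` words.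
-/

open Finset

theorem card_subtype_of_snoc_iff {α : Type*} [Fintype α] {k c : ℕ}
    {P : (Fin k → α) → Prop} {Q : (Fin (k + 1) → α) → Prop} (E : (Fin k → α) → Finset α)
    (hQ : ∀ s x, Q (Fin.snoc s x) ↔ P s ∧ x ∈ E s) (hE : ∀ s, P s → #(E s) = c) :
    Nat.card {t // Q t} = Nat.card {s // P s} * c := by
  classical
  simp only [Nat.card_eq_fintype_card, Fintype.card_subtype]
  have hmaps : ((univ.filter Q : Finset _) : Set (Fin (k + 1) → α)).MapsTo Fin.init
      (univ.filter P) := fun t ht => by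
    rw [coe_filter, Set.mem_ofPred_eq, ← Fin.snoc_init_self t, hQ] at ht
    simpa using ht.2.1
  rw [card_eq_sum_card_fiberwise hmaps, ← smul_eq_mul, ← sum_const]
  refine sum_congr rfl fun s hs => ?_
  rw [mem_filter] at hs
  have hfiber : {t ∈ univ.filter Q | Fin.init t = s} = (E s).image (Fin.snoc s) := by
    ext t
    obtain ⟨s', x, rfl⟩ : ∃ s' x, t = Fin.snoc s' x := ⟨_, _, (Fin.snoc_init_self t).symm⟩
    simp only [mem_filter, mem_univ, true_and, hQ, Fin.init_snoc, mem_image, Fin.snoc_inj]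
    constructor
    · rintro ⟨⟨-, hx⟩, rfl⟩
      exact ⟨x, hx, rfl, rfl⟩
    · rintro ⟨x, hx, rfl, rfl⟩
      exact ⟨⟨hs.2, hx⟩, rfl⟩
  rw [hfiber, card_image_of_injective _ (Fin.snoc_right_injective _), hE s hs.2]

namespace ArcPerm

variable {m : ℕ}

def cyclicInterval (a : ZMod m) (k : ℕ) : Finset (ZMod m) :=
  (range k).image fun j : ℕ => a + (j : ZMod m)

theorem mem_cyclicInterval [NeZero m] {a x : ZMod m} {k : ℕ} (hk : k ≤ m) :
    x ∈ cyclicInterval a k ↔ (x - a).val < k := by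
  simp only [cyclicInterval, mem_image, mem_range]
  constructor
  · rintro ⟨j, hj, rfl⟩
    simpa [ZMod.val_cast_of_lt (hj.trans_le hk)] using hj
  · exact fun h => ⟨(x - a).val, h, by simp⟩

theorem card_cyclicInterval (a : ZMod m) {k : ℕ} (hk : k ≤ m) : #(cyclicInterval a k) = k := by
  rw [cyclicInterval, card_image_of_injOn, card_range]
  intro i hi j hj hij
  simp only [coe_range, Set.mem_Iio] at hi hj
  simpa [ZMod.val_cast_of_lt (hi.trans_le hk), ZMod.val_cast_of_lt (hj.trans_le hk)]
    using congrArg ZMod.val (add_left_cancel hij)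

theorem isCyclicInterval_cyclicInterval [NeZero m] (a : ZMod m) {k : ℕ} (hk : k ≤ m) :
    IsCyclicInterval (cyclicInterval a k) :=
  ⟨a, by rw [card_cyclicInterval a hk]; rfl⟩

theorem cyclicInterval_succ (a : ZMod m) (k : ℕ) :
    cyclicInterval a (k + 1) = insert (a + k) (cyclicInterval a k) := by
  simp only [cyclicInterval, range_add_one, image_insert]

theorem cyclicInterval_sub_one_succ (a : ZMod m) (k : ℕ) :
    cyclicInterval (a - 1) (k + 1) = insert (a - 1) (cyclicInterval a k) := by
  simp only [cyclicInterval, range_add_one', image_insert, map_eq_image, image_image]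
  congr 2
  · simp
  · ext j
    change a - 1 + ((j + 1 : ℕ) : ZMod m) = a + j
    push_cast
    ring

theorem eq_or_eq_sub_one_of_subset [NeZero m] {a c : ZMod m} {k : ℕ} (hk : 1 ≤ k) (hkm : k + 1 < m)
    (h : cyclicInterval a k ⊆ cyclicInterval c (k + 1)) : c = a ∨ c = a - 1 := by
  have hac : a - c = ((a - c).val : ZMod m) := by simp
  have hd : (a - c).val < k + 1 :=
    (mem_cyclicInterval hkm.le).mp (h ((mem_cyclicInterval (by omega)).mpr (by simp; omega)))
  obtain hd2 | hd2 := Nat.lt_or_ge (a - c).val 2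
  · interval_cases hval : (a - c).val
    · left
      simpa [sub_eq_zero, eq_comm] using hac
    · right
      rw [Nat.cast_one] at hac
      rw [← hac]
      ring
  · -- `c + (k + 1)` then lies in the smaller interval but not in the larger one
    exfalso
    have hout : c + ((k + 1 : ℕ) : ZMod m) ∉ cyclicInterval c (k + 1) := by
      rw [mem_cyclicInterval hkm.le, add_sub_cancel_left, ZMod.val_cast_of_lt hkm]
      exact lt_irrefl _
    refine hout (h ((mem_cyclicInterval (by omega)).mpr ?_))
    have : c + ((k + 1 : ℕ) : ZMod m) - a = ((k + 1 - (a - c).val : ℕ) : ZMod m) := by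
      rw [Nat.cast_sub hd.le, ← hac]; ring
    rw [this, ZMod.val_cast_of_lt (by omega)]
    omega

theorem card_pair_sub_one_add (a : ZMod m) {k : ℕ} (hkm : k < m) :
    #{a - 1, a + (k : ZMod m)} = if k + 1 = m then 1 else 2 := by
  have hcoll : a - 1 = a + k ↔ ((k + 1 : ℕ) : ZMod m) = 0 := by
    push_cast
    constructor <;> intro h <;> linear_combination -h
  rw [ZMod.natCast_eq_zero_iff] at hcoll
  split_ifs with h
  · rw [hcoll.mpr (h ▸ dvd_rfl), pair_eq_singleton, card_singleton]
  · refine card_pair fun hne => h ?_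
    have := Nat.le_of_dvd (Nat.succ_pos k) (hcoll.mp hne)
    omega

variable [NeZero m]

instance : DecidablePred (IsCyclicInterval (n := m)) := fun s => by
  unfold IsCyclicInterval
  infer_instance

def cyclicExtensions (s : Finset (ZMod m)) : Finset (ZMod m) :=
  univ.filter fun x => x ∉ s ∧ IsCyclicInterval (insert x s)

theorem cyclicExtensions_empty : cyclicExtensions (∅ : Finset (ZMod m)) = univ := by
  ext x
  have hx : ({x} : Finset (ZMod m)) = cyclicInterval x 1 := by simp [cyclicInterval]
  simp only [cyclicExtensions, insert_empty, mem_filter, mem_univ, notMem_empty,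
    not_false_eq_true, true_and, iff_true]
  rw [hx]
  exact isCyclicInterval_cyclicInterval x NeZero.one_le

theorem cyclicExtensions_cyclicInterval (a : ZMod m) {k : ℕ} (hk : 0 < k) (hkm : k < m) :
    cyclicExtensions (cyclicInterval a k) = {a - 1, a + k} := by
  have notMem_of_insert_eq {y : ZMod m} {c : ZMod m}
      (h : insert y (cyclicInterval a k) = cyclicInterval c (k + 1)) :
      y ∉ cyclicInterval a k := fun hy => by
    have := congrArg card h
    rw [insert_eq_of_mem hy, card_cyclicInterval _ hkm.le, card_cyclicInterval _ hkm] at this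
    omega
  ext x
  simp only [cyclicExtensions, mem_filter, mem_univ, true_and, mem_insert, mem_singleton]
  constructor
  · rintro ⟨hx, c, hc⟩
    change _ = cyclicInterval c _ at hc
    rw [card_insert_of_notMem hx, card_cyclicInterval _ hkm.le] at hc
    obtain hlast | hlt := (Nat.succ_le_of_lt hkm).eq_or_lt
    · right
      have hval : (x - a).val = k := by
        have := (mem_cyclicInterval hkm.le).not.mp hx
        have := ZMod.val_lt (x - a)
        omega
      rw [← hval, ZMod.natCast_zmod_val, add_sub_cancel]
    · have hxc : x ∈ cyclicInterval c (k + 1) := hc ▸ mem_insert_self x _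
      obtain rfl | rfl := eq_or_eq_sub_one_of_subset hk hlt (hc ▸ subset_insert x _)
      · rw [cyclicInterval_succ] at hxc
        exact .inr ((mem_insert.mp hxc).resolve_right hx)
      · rw [cyclicInterval_sub_one_succ] at hxc
        exact .inl ((mem_insert.mp hxc).resolve_right hx)
  · rintro (rfl | rfl)
    · rw [← cyclicInterval_sub_one_succ]
      exact ⟨notMem_of_insert_eq (cyclicInterval_sub_one_succ a k).symm,
        isCyclicInterval_cyclicInterval _ hkm⟩
    · rw [← cyclicInterval_succ]
      exact ⟨notMem_of_insert_eq (cyclicInterval_succ a k).symm,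
        isCyclicInterval_cyclicInterval _ hkm⟩

def IsArcSeq {k : ℕ} (s : Fin k → ZMod m) : Prop :=
  Function.Injective s ∧
    ∀ j : ℕ, IsCyclicInterval ((univ.filter fun i : Fin k => i.val < j).image s)

section snoc

variable {α : Type*} [DecidableEq α] {k j : ℕ} (s : Fin k → α) (x : α)

theorem image_filter_val_lt_of_le (hj : k ≤ j) :
    (univ.filter fun i : Fin k => i.val < j).image s = univ.image s := by
  rw [filter_true_of_mem fun i _ => i.isLt.trans_le hj]

theorem image_filter_val_lt_snoc_of_le (hj : j ≤ k) :
    (univ.filter fun i : Fin (k + 1) => i.val < j).image (Fin.snoc s x) =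
      (univ.filter fun i : Fin k => i.val < j).image s := by
  ext y
  simp only [mem_image, mem_filter, mem_univ, true_and, Fin.exists_fin_succ', Fin.val_castSucc,
    Fin.snoc_castSucc, Fin.val_last, Fin.snoc_last, or_iff_left_iff_imp, and_imp]
  omega

theorem image_filter_val_lt_snoc_of_lt (hj : k < j) :
    (univ.filter fun i : Fin (k + 1) => i.val < j).image (Fin.snoc s x) =
      insert x (univ.image s) := by
  rw [image_filter_val_lt_of_le _ hj]
  ext y
  simp [Fin.exists_fin_succ', or_comm, eq_comm]

end snoc

theorem isArcSeq_snoc_iff {k : ℕ} (s : Fin k → ZMod m) (x : ZMod m) :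
    IsArcSeq (Fin.snoc s x) ↔ IsArcSeq s ∧ x ∈ cyclicExtensions (univ.image s) := by
  have hprefixes : (∀ j, IsCyclicInterval
        ((univ.filter fun i : Fin (k + 1) => i.val < j).image (Fin.snoc s x))) ↔
      (∀ j, IsCyclicInterval ((univ.filter fun i : Fin k => i.val < j).image s)) ∧
        IsCyclicInterval (insert x (univ.image s)) := by
    constructor
    · intro h
      refine ⟨fun j => ?_, ?_⟩
      · obtain hj | hj := le_total j k
        · rw [← image_filter_val_lt_snoc_of_le s x hj]
          exact h j
        · rw [image_filter_val_lt_of_le s hj, ← image_filter_val_lt_of_le s le_rfl,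
            ← image_filter_val_lt_snoc_of_le s x le_rfl]
          exact h k
      · rw [← image_filter_val_lt_snoc_of_lt s x k.lt_succ_self]
        exact h (k + 1)
    · rintro ⟨h, hx⟩ j
      obtain hj | hj := le_or_gt j k
      · rw [image_filter_val_lt_snoc_of_le s x hj]
        exact h j
      · rw [image_filter_val_lt_snoc_of_lt s x hj]
        exact hx
  simp only [IsArcSeq, Fin.snoc_injective_iff, hprefixes, cyclicExtensions, mem_filter, mem_univ,
    true_and, mem_image, Set.mem_range]
  tauto

theorem card_isArcSeq_succ {k c : ℕ}
    (hc : ∀ a : ZMod m, #(cyclicExtensions (cyclicInterval a k)) = c) :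
    Nat.card {t : Fin (k + 1) → ZMod m // IsArcSeq t} =
      Nat.card {s : Fin k → ZMod m // IsArcSeq s} * c := by
  refine card_subtype_of_snoc_iff _ isArcSeq_snoc_iff fun s hs => ?_
  obtain ⟨a, ha⟩ := hs.2 k
  rw [image_filter_val_lt_of_le s le_rfl, card_image_of_injective _ hs.1, card_univ,
    Fintype.card_fin] at ha
  change _ = cyclicInterval a k at ha
  rw [ha, hc]

theorem card_isArcSeq_zero : Nat.card {s : Fin 0 → ZMod m // IsArcSeq s} = 1 := by
  have harc : IsArcSeq (Fin.elim0 : Fin 0 → ZMod m) :=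
    ⟨fun i => i.elim0, fun _ => ⟨0, by simp⟩⟩
  exact Nat.card_eq_one_iff_unique.mpr ⟨inferInstance, ⟨⟨_, harc⟩⟩⟩

theorem card_isArcSeq_one : Nat.card {s : Fin 1 → ZMod m // IsArcSeq s} = m := by
  rw [card_isArcSeq_succ (c := m) fun a => ?_, card_isArcSeq_zero, one_mul]
  simp [cyclicInterval, cyclicExtensions_empty]

theorem card_isArcSeq_of_le {n j : ℕ} (hj : j ≤ n) :
    Nat.card {s : Fin (j + 1) → ZMod (n + 2) // IsArcSeq s} = (n + 2) * 2 ^ j := by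
  induction j with
  | zero => simpa using card_isArcSeq_one
  | succ j ih =>
    rw [card_isArcSeq_succ (c := 2) fun a => ?_, ih (by omega), pow_succ, mul_assoc]
    rw [cyclicExtensions_cyclicInterval a (by omega) (by omega),
      card_pair_sub_one_add a (by omega), if_neg (by omega)]

theorem card_isArcSeq_self (n : ℕ) :
    Nat.card {s : Fin (n + 2) → ZMod (n + 2) // IsArcSeq s} = (n + 2) * 2 ^ n := by
  rw [card_isArcSeq_succ (c := 1) fun a => ?_, card_isArcSeq_of_le le_rfl, mul_one]
  rw [cyclicExtensions_cyclicInterval a (by omega) (by omega),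
    card_pair_sub_one_add a (by omega), if_pos rfl]

/-- `ZMod (n + 2)` is definitionally `Fin (n + 2)`, so a permutation is itself a word of length
`n + 2`, and `IsArcPerm` is literally the prefix condition of `IsArcSeq`. -/
noncomputable def arcPermEquivArcSeq (n : ℕ) :
    {π : Equiv.Perm (ZMod (n + 2)) // IsArcPerm π} ≃
      {s : Fin (n + 2) → ZMod (n + 2) // IsArcSeq s} where
  toFun π := ⟨π.1, π.1.injective, π.2⟩
  invFun s := ⟨Equiv.ofBijective s.1 (Finite.injective_iff_bijective.mp s.2.1), s.2.2⟩
  left_inv _ := Subtype.ext (Equiv.ext fun _ => rfl)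
  right_inv _ := rfl

end ArcPerm

/-- The number of arc permutations in `S_n` is `n·2^(n-2)`, for `n ≥ 2`
(here `n` is `n+2`). -/
theorem stmt1 (n : ℕ) :
    Nat.card {π : Equiv.Perm (ZMod (n + 2)) // IsArcPerm π} = (n + 2) * 2 ^ n := by
  rw [Nat.card_congr (ArcPerm.arcPermEquivArcSeq n), ArcPerm.card_isArcSeq_self]
end

section
/- Let H ≤ G be finite groups, and suppose every double coset HgH of H in G satisfies (HgH)^{-1} = HgH. Then the permutation representation of G on the cosets of H is multiplicity-free. -/
/-!
Gelfand's trick. In the basis of indicator functions of cosets, a `G`-equivariant operator on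
functions on `G ⧸ H` has a `G`-invariant kernel `k (g • x) (g • y) = k x y`. If every double coset
is closed under inversion, any two cosets can be interchanged by one element of `G`, so every
invariant kernel is symmetric. The commutant is therefore made of symmetric matrices and is closed
under products, and symmetric `A`, `B` with `A * B` symmetric commute: `A * B = (A * B)ᵀ = B * A`.
-/

/-- A linear endomorphism of the space of complex-valued functions on `X` is
`G`-equivariant if it commutes with the natural action of `G` on functions. -/
def IsEquivariantMap (G X : Type*) [Group G] [MulAction G X]
    (f : (X → ℂ) →ₗ[ℂ] (X → ℂ)) : Prop :=
  ∀ (g : G) (v : X → ℂ), f (fun x => v (g⁻¹ • x)) = fun x => f v (g⁻¹ • x)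

/-- The permutation representation of `G` on `X` is multiplicity-free:
equivalently, its commutant algebra is commutative. -/
def IsMultFreeAction (G X : Type*) [Group G] [MulAction G X] : Prop :=
  ∀ f₁ f₂ : (X → ℂ) →ₗ[ℂ] (X → ℂ),
    IsEquivariantMap G X f₁ → IsEquivariantMap G X f₂ → f₁ ∘ₗ f₂ = f₂ ∘ₗ f₁

def MulAction.IsGenerouslyTransitive (G X : Type*) [Group G] [MulAction G X] : Prop :=
  ∀ x y : X, ∃ g : G, g • x = y ∧ g • y = x

open Matrix in
theorem Matrix.IsSymm.commute_of_isSymm_mul {n α : Type*} [Fintype n] [CommSemiring α]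
    {A B : Matrix n n α} (hA : A.IsSymm) (hB : B.IsSymm) (hAB : (A * B).IsSymm) :
    Commute A B :=
  calc A * B = (A * B)ᵀ := hAB.eq.symm
    _ = B * A := by rw [Matrix.transpose_mul, hA.eq, hB.eq]

namespace IsEquivariantMap

variable {G X : Type*} [Group G] [MulAction G X]

theorem comp {f₁ f₂ : (X → ℂ) →ₗ[ℂ] (X → ℂ)} (h₁ : IsEquivariantMap G X f₁)
    (h₂ : IsEquivariantMap G X f₂) : IsEquivariantMap G X (f₁ ∘ₗ f₂) := fun g v => by
  simp only [LinearMap.comp_apply, h₂ g v, h₁ g (f₂ v)]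

variable [Fintype X] [DecidableEq X] {f : (X → ℂ) →ₗ[ℂ] (X → ℂ)}

theorem toMatrix'_smul_smul (hf : IsEquivariantMap G X f) (g : G) (x y : X) :
    LinearMap.toMatrix' f (g • x) (g • y) = LinearMap.toMatrix' f x y := by
  have hsingle : (Pi.single (g • y) 1 : X → ℂ) = fun z => (Pi.single y 1 : X → ℂ) (g⁻¹ • z) := by
    funext z
    simp only [Pi.single_apply, inv_smul_eq_iff]
  rw [LinearMap.toMatrix'_apply, LinearMap.toMatrix'_apply, hsingle, hf]
  simp only [inv_smul_smul]

theorem toMatrix'_isSymm (hX : MulAction.IsGenerouslyTransitive G X)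
    (hf : IsEquivariantMap G X f) : (LinearMap.toMatrix' f).IsSymm :=
  Matrix.IsSymm.ext fun x y => by
    obtain ⟨g, hgx, hgy⟩ := hX x y
    rw [← hf.toMatrix'_smul_smul g, hgx, hgy]

end IsEquivariantMap

theorem MulAction.IsGenerouslyTransitive.isMultFreeAction {G X : Type*} [Group G]
    [MulAction G X] [Finite X] (hX : IsGenerouslyTransitive G X) : IsMultFreeAction G X := by
  intro f₁ f₂ h₁ h₂
  have := Fintype.ofFinite X
  classical
  apply LinearMap.toMatrix'.injective
  rw [LinearMap.toMatrix'_comp, LinearMap.toMatrix'_comp]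
  exact Matrix.IsSymm.commute_of_isSymm_mul (h₁.toMatrix'_isSymm hX) (h₂.toMatrix'_isSymm hX)
    (by rw [← LinearMap.toMatrix'_comp]; exact (h₁.comp h₂).toMatrix'_isSymm hX)

theorem Subgroup.isGenerouslyTransitive_of_forall_doubleCoset_inv {G : Type*} [Group G]
    (H : Subgroup G) (h : ∀ g : G,
      (DoubleCoset.doubleCoset g (H : Set G) (H : Set G))⁻¹ =
        DoubleCoset.doubleCoset g (H : Set G) (H : Set G)) :
    MulAction.IsGenerouslyTransitive G (G ⧸ H) := by
  intro x y
  induction x using QuotientGroup.induction_on with | H a =>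
  induction y using QuotientGroup.induction_on with | H b =>
  have hmem : (a⁻¹ * b)⁻¹ ∈ DoubleCoset.doubleCoset (a⁻¹ * b) (H : Set G) H := by
    rw [← h, Set.inv_mem_inv]
    exact DoubleCoset.mem_doubleCoset_self _ _ _
  obtain ⟨h₁, hh₁, h₂, hh₂, hc⟩ := DoubleCoset.mem_doubleCoset.mp hmem
  -- With `c = a⁻¹ * b`, `hc` reads `c⁻¹ = h₁ * c * h₂`; the swap `b * h₂ * a⁻¹` sends `aH` to
  -- `b * h₂ * H = bH` and `bH` to `a * (c * h₂ * c) * H = a * h₁⁻¹ * H = aH`.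
  refine ⟨b * h₂ * a⁻¹, ?_, ?_⟩
  · rw [MulAction.Quotient.smul_mk, smul_eq_mul, QuotientGroup.eq]
    simpa using hh₂
  · rw [MulAction.Quotient.smul_mk, smul_eq_mul, QuotientGroup.eq]
    have hh₁_eq : h₁ = (a⁻¹ * b)⁻¹ * h₂⁻¹ * (a⁻¹ * b)⁻¹ := by
      nth_rewrite 1 [hc]
      group
    have hgb : (b * h₂ * a⁻¹ * b)⁻¹ * a = h₁ := by
      rw [hh₁_eq]
      group
    rw [hgb]
    exact hh₁

/-- Gelfand's trick: if every double coset of `H` in the finite group `G` is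
closed under inversion, then the permutation representation of `G` on the
cosets of `H` is multiplicity-free. -/
theorem stmt2 {G : Type*} [Group G] [Fintype G] (H : Subgroup G)
    (h : ∀ g : G,
      (DoubleCoset.doubleCoset g (H : Set G) (H : Set G))⁻¹ = DoubleCoset.doubleCoset g (H : Set G) (H : Set G)) :
    IsMultFreeAction G (G ⧸ H) :=
  (H.isGenerouslyTransitive_of_forall_doubleCoset_inv h).isMultFreeAction
end

section
/- Let H ≤ G be (possibly infinite) groups such that every double coset of H in G contains an involution (an element g with g² = 1, allowing g = 1). Then for every surjective homomorphism φ of G onto a finite group, the pair (φ(G), φ(H)) is a Gelfand pair, i.e., the permutation representation of φ(G) on the cosets of φ(H) is multiplicity-free. -/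
theorem LinearMap.apply_eq_sum_mul_apply_single {X : Type*} [Fintype X] [DecidableEq X]
    (f : (X → ℂ) →ₗ[ℂ] (X → ℂ)) (v : X → ℂ) (x : X) :
    f v x = ∑ y, v y * f (Pi.single y 1) x := by
  rw [f.pi_apply_eq_sum_univ v, Finset.sum_apply]
  refine Finset.sum_congr rfl fun y _ => ?_
  have hsingle : (fun j => if y = j then 1 else 0) = (Pi.single y 1 : X → ℂ) :=
    funext fun j => by simp only [Pi.single_apply, eq_comm]
  rw [Pi.smul_apply, smul_eq_mul, hsingle]

section EquivariantMap

variable {G X : Type*} [Group G] [MulAction G X]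

theorem IsEquivariantMap.comp_s3 {f₁ f₂ : (X → ℂ) →ₗ[ℂ] (X → ℂ)}
    (hf₁ : IsEquivariantMap G X f₁) (hf₂ : IsEquivariantMap G X f₂) :
    IsEquivariantMap G X (f₁ ∘ₗ f₂) := fun g v => by
  simp only [LinearMap.comp_apply, hf₂ g v, hf₁ g (f₂ v)]

variable [DecidableEq X]

theorem IsEquivariantMap.apply_single_smul {f : (X → ℂ) →ₗ[ℂ] (X → ℂ)}
    (hf : IsEquivariantMap G X f) (g : G) (x y : X) :
    f (Pi.single (g • y) 1) (g • x) = f (Pi.single y 1) x := by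
  have hsingle : (fun z => (Pi.single y 1 : X → ℂ) (g⁻¹ • z)) = Pi.single (g • y) 1 := by
    funext z
    simp only [Pi.single_apply, inv_smul_eq_iff]
  rw [← hsingle, hf g]
  exact congrArg _ (inv_smul_smul g x)

theorem IsEquivariantMap.apply_single_comm (hswap : ∀ x y : X, ∃ g : G, g • x = y ∧ g • y = x)
    {f : (X → ℂ) →ₗ[ℂ] (X → ℂ)} (hf : IsEquivariantMap G X f) (x y : X) :
    f (Pi.single y 1) x = f (Pi.single x 1) y := by
  obtain ⟨g, hgx, hgy⟩ := hswap x y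
  rw [← hf.apply_single_smul g y x, hgx, hgy]

end EquivariantMap

theorem isMultFreeAction_of_forall_exists_swap {G X : Type*} [Group G] [MulAction G X]
    [Finite X] (hswap : ∀ x y : X, ∃ g : G, g • x = y ∧ g • y = x) : IsMultFreeAction G X := by
  have := Fintype.ofFinite X
  classical
  intro f₁ f₂ hf₁ hf₂
  have hsymm {f} (hf : IsEquivariantMap G X f) := hf.apply_single_comm hswap
  have hsingle : ∀ x y : X, (f₁ ∘ₗ f₂) (Pi.single y 1) x = (f₂ ∘ₗ f₁) (Pi.single y 1) x := by
    intro x y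
    calc (f₁ ∘ₗ f₂) (Pi.single y 1) x
        = f₁ (f₂ (Pi.single x 1)) y := hsymm (hf₁.comp_s3 hf₂) x y
      _ = ∑ z, f₂ (Pi.single x 1) z * f₁ (Pi.single z 1) y :=
          f₁.apply_eq_sum_mul_apply_single _ y
      _ = ∑ z, f₁ (Pi.single y 1) z * f₂ (Pi.single z 1) x :=
          Finset.sum_congr rfl fun z _ => by rw [hsymm hf₂ z x, hsymm hf₁ y z, mul_comm]
      _ = (f₂ ∘ₗ f₁) (Pi.single y 1) x := (f₂.apply_eq_sum_mul_apply_single _ x).symm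
  refine LinearMap.ext fun v => funext fun x => ?_
  rw [LinearMap.apply_eq_sum_mul_apply_single, LinearMap.apply_eq_sum_mul_apply_single]
  simp only [hsingle]

theorem exists_involution_mem_doubleCoset_map {G G₁ : Type*} [Group G] [Group G₁]
    {H : Subgroup G}
    (h : ∀ g : G, ∃ x ∈ DoubleCoset.doubleCoset g (H : Set G) (H : Set G), x * x = 1)
    {φ : G →* G₁} (hφ : Function.Surjective φ) (g₁ : G₁) :
    ∃ x ∈ DoubleCoset.doubleCoset g₁ (H.map φ : Set G₁) (H.map φ : Set G₁), x * x = 1 := by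
  obtain ⟨g, rfl⟩ := hφ g₁
  obtain ⟨x, hx, hxx⟩ := h g
  obtain ⟨a, ha, b, hb, rfl⟩ := DoubleCoset.mem_doubleCoset.1 hx
  refine ⟨φ (a * g * b), DoubleCoset.mem_doubleCoset.2 ?_, by rw [← map_mul, hxx, map_one]⟩
  exact ⟨φ a, H.mem_map_of_mem φ ha, φ b, H.mem_map_of_mem φ hb, by simp only [map_mul]⟩

theorem exists_smul_swap_of_involution_mem_doubleCoset {G : Type*} [Group G] {H : Subgroup G}
    (h : ∀ g : G, ∃ x ∈ DoubleCoset.doubleCoset g (H : Set G) (H : Set G), x * x = 1)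
    (x y : G ⧸ H) : ∃ g : G, g • x = y ∧ g • y = x := by
  obtain ⟨a, rfl⟩ := QuotientGroup.mk_surjective x
  obtain ⟨b, rfl⟩ := QuotientGroup.mk_surjective y
  obtain ⟨t, ht, htt⟩ := h (a⁻¹ * b)
  obtain ⟨h₁, hh₁, h₂, hh₂, rfl⟩ := DoubleCoset.mem_doubleCoset.1 ht
  set t := h₁ * (a⁻¹ * b) * h₂
  -- `t` swaps `H` and `tH`, and `c` carries this pair onto `aH, bH`.
  set c := a * h₁⁻¹
  have hc_one : c • ((1 : G) : G ⧸ H) = a := by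
    rw [MulAction.Quotient.smul_coe, smul_eq_mul, mul_one, QuotientGroup.eq]
    simpa [c] using hh₁
  have hc_t : c • (t : G ⧸ H) = b := by
    rw [MulAction.Quotient.smul_coe, smul_eq_mul, QuotientGroup.eq]
    simpa [c, t, mul_assoc] using hh₂
  have ht_one : t • ((1 : G) : G ⧸ H) = t := by
    rw [MulAction.Quotient.smul_coe, smul_eq_mul, mul_one]
  have ht_t : t • (t : G ⧸ H) = (1 : G) := by
    rw [MulAction.Quotient.smul_coe, smul_eq_mul, htt]
  refine ⟨c * t * c⁻¹, ?_, ?_⟩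
  · rw [← hc_one, ← hc_t, smul_smul, inv_mul_cancel_right, mul_smul, ht_one]
  · rw [← hc_one, ← hc_t, smul_smul, inv_mul_cancel_right, mul_smul, ht_t]

/-- If every double coset of `H` in `G` contains an involution, then for every
surjection `φ` of `G` onto a finite group, `(φ(G), φ(H))` is a Gelfand pair,
i.e. the permutation representation of `φ(G)` on the cosets of `φ(H)` is
multiplicity-free. -/
theorem stmt3 {G : Type*} [Group G] (H : Subgroup G)
    (h : ∀ g : G, ∃ x ∈ DoubleCoset.doubleCoset g (H : Set G) (H : Set G), x * x = 1) :
    ∀ (G₁ : Type*) [Group G₁] [Finite G₁] (φ : G →* G₁), Function.Surjective φ →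
      IsMultFreeAction G₁ (G₁ ⧸ Subgroup.map φ H) := by
  intro G₁ _ _ φ hφ
  exact isMultFreeAction_of_forall_exists_swap
    (exists_smul_swap_of_involution_mem_doubleCoset (exists_involution_mem_doubleCoset_map h hφ))
end
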